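/- Let B(t) = Σ_{i=0}^{n} c_i b_n^i(t) be a Bézier polynomial of degree n ≥ 1. If the control points satisfy p0_lo + p1_lo · M_{i,1} ≤ c_i ≤ p0_hi + p1_hi · M_{i,1} for all i = 0,...,n, where M_{i,1} = i/n, then for all t ∈ [0,1], p0_lo + p1_lo · t ≤ B(t) ≤ p0_hi + p1_hi · t. (Trapezoidal corridor enforcement.) -/
import Mathlib


/-- Bernstein basis polynomial `b_n^i(t) = C(n,i) t^i (1-t)^(n-i)`. -/
noncomputable def bern (n i : ℕ) (t : ℝ) : ℝ := (n.choose i : ℝ) * t ^ i * (1 - t) ^ (n - i)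

lemma bern_eq_eval (n i : ℕ) (t : ℝ) :
    bern n i t = (bernsteinPolynomial ℝ n i).eval t := by
  simp [bern, bernsteinPolynomial, mul_comm, mul_assoc, mul_left_comm]

lemma bern_sum (n : ℕ) (t : ℝ) :
    ∑ i ∈ Finset.range (n + 1), bern n i t = 1 := by
  simp only [bern_eq_eval, ← Polynomial.eval_finset_sum]
  rw [bernsteinPolynomial.sum]; simp

lemma bern_sum_smul (n : ℕ) (t : ℝ) :
    ∑ i ∈ Finset.range (n + 1), (i : ℝ) * bern n i t = n * t := by
  have := congrArg (Polynomial.eval t) (bernsteinPolynomial.sum_smul ℝ n)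
  simpa [bern_eq_eval, Polynomial.eval_finset_sum] using this

lemma bern_nonneg (n i : ℕ) {t : ℝ} (h0 : 0 ≤ t) (h1 : t ≤ 1) : 0 ≤ bern n i t := by
  have : (0:ℝ) ≤ 1 - t := by linarith
  unfold bern; positivity

/-- Trapezoidal corridor enforcement via control points, with `M_{i,1} = i/n`. -/
theorem stmt_7 (n : ℕ) (hn : 1 ≤ n) (c : ℕ → ℝ) (p0_lo p1_lo p0_hi p1_hi : ℝ)
    (hc : ∀ i, i ≤ n →
      p0_lo + p1_lo * ((i : ℝ) / (n : ℝ)) ≤ c i ∧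
      c i ≤ p0_hi + p1_hi * ((i : ℝ) / (n : ℝ))) :
    ∀ t ∈ Set.Icc (0 : ℝ) 1,
      p0_lo + p1_lo * t ≤ ∑ i ∈ Finset.range (n + 1), c i * bern n i t ∧
      ∑ i ∈ Finset.range (n + 1), c i * bern n i t ≤ p0_hi + p1_hi * t := by
  intro t ht
  obtain ⟨h0, h1⟩ := ht
  have hn0 : (n : ℝ) ≠ 0 := by positivity
  have key : ∀ p0 p1 : ℝ,
      ∑ i ∈ Finset.range (n + 1), (p0 + p1 * ((i : ℝ) / (n : ℝ))) * bern n i t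
        = p0 + p1 * t := by
    intro p0 p1
    have : ∑ i ∈ Finset.range (n + 1), (p0 + p1 * ((i : ℝ) / (n : ℝ))) * bern n i t
        = p0 * ∑ i ∈ Finset.range (n + 1), bern n i t
          + (p1 / n) * ∑ i ∈ Finset.range (n + 1), (i : ℝ) * bern n i t := by
      rw [Finset.mul_sum, Finset.mul_sum, ← Finset.sum_add_distrib]
      apply Finset.sum_congr rfl
      intro i _; field_simp
    rw [this, bern_sum, bern_sum_smul]
    field_simp
  constructor
  · rw [← key p0_lo p1_lo]
    apply Finset.sum_le_sum
    intro i hi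
    exact mul_le_mul_of_nonneg_right ((hc i (Nat.lt_succ_iff.mp (Finset.mem_range.mp hi))).1)
      (bern_nonneg n i h0 h1)
  · rw [← key p0_hi p1_hi]
    apply Finset.sum_le_sum
    intro i hi
    exact mul_le_mul_of_nonneg_right ((hc i (Nat.lt_succ_iff.mp (Finset.mem_range.mp hi))).2)
      (bern_nonneg n i h0 h1)
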